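/- Let d ≥ 3 be an integer and let ζ ∈ (0, π). Then ∫_ζ^π (1 − cos θ)^{−(d−2)/2} (1 + cos θ)^{(d−3)/2} · sin θ / √(cos ζ − cos θ) dθ = (√π · Γ((d−1)/2) / Γ(d/2)) · cos^{d−2}(ζ/2) · ₂F₁((d−2)/2, (d−1)/2; d/2; cos²(ζ/2)). -/

import Mathlib

open Real MeasureTheory

/-- The Pochhammer symbol `(a)_n = a(a+1)⋯(a+n−1)`, with `(a)_0 = 1`. -/
noncomputable def poch (a : ℝ) (n : ℕ) : ℝ := ∏ i ∈ Finset.range n, (a + i)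

/-- The Gauss hypergeometric function `₂F₁(a,b;c;z) = Σₙ ((a)ₙ(b)ₙ/(c)ₙ) zⁿ/n!`. -/
noncomputable def hyp2F1 (a b c z : ℝ) : ℝ :=
  ∑' n : ℕ, poch a n * poch b n / poch c n * z ^ n / (n.factorial : ℝ)

open Set

/-!
With `a = (d-2)/2`, `b = (d-1)/2 = a + 1/2` and `z = cos² (ζ/2)`, so that `cos ζ = 2z - 1`,
the substitutions `u = cos θ` and `u = 2zs - 1` turn the integral into
`z^a ∫₀¹ s^(b-1) (1-s)^(-1/2) (1-zs)^(-a) ds`. This is Euler's integral for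
`₂F₁(a, b; b + 1/2; z)`: expanding `(1-zs)^(-a)` in its binomial series, each term integrates to
a Beta function `B(b+n, 1/2) = B(b, 1/2) (b)ₙ / (b+1/2)ₙ`, and the termwise integration is
justified by the absolute convergence of the hypergeometric series for `|z| < 1`.
-/

lemma poch_eq_ascPochhammer_eval (a : ℝ) (n : ℕ) : poch a n = (ascPochhammer ℝ n).eval a := by
  induction n with
  | zero => simp [poch]
  | succ n ih => rw [poch, Finset.prod_range_succ, ← poch, ih, ascPochhammer_succ_eval]

lemma poch_pos {a : ℝ} (ha : 0 < a) (n : ℕ) : 0 < poch a n :=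
  Finset.prod_pos fun i _ => by positivity

lemma Gamma_add_nat_eq_mul_poch {a : ℝ} (ha : 0 < a) (n : ℕ) :
    Gamma (a + n) = Gamma a * poch a n := by
  induction n with
  | zero => simp [poch]
  | succ n ih =>
    rw [Nat.cast_succ, ← add_assoc, Gamma_add_one (by positivity), ih]
    simp only [poch, Finset.prod_range_succ]
    ring

lemma hasSum_poch_div_factorial_mul_pow (a : ℝ) {t : ℝ} (ht : |t| < 1) :
    HasSum (fun n : ℕ => poch a n / n.factorial * t ^ n) ((1 - t) ^ (-a)) := by
  have h := (one_div_one_sub_rpow_hasFPowerSeriesOnBall_zero a).hasSum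
    (y := t) (by simpa [enorm_eq_nnnorm, ← NNReal.coe_lt_coe] using ht)
  rw [zero_add, one_div, ← rpow_neg (by linarith [le_abs_self t])] at h
  refine h.congr_fun fun n => ?_
  rw [FormalMultilinearSeries.ofScalars_apply_eq, Ring.choose_eq_smul,
    Polynomial.descPochhammer_smeval_eq_ascPochhammer, Polynomial.ascPochhammer_smeval_cast,
    Polynomial.ascPochhammer_smeval_eq_eval, poch_eq_ascPochhammer_eval]
  simp only [smul_eq_mul]
  ring_nf

lemma summable_hyp2F1_terms {a b c : ℝ} (ha : 0 < a) (hb : 0 < b) (hc : 0 < c) {z : ℝ}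
    (hz : |z| < 1) :
    Summable (fun n : ℕ => poch a n * poch b n / poch c n * z ^ n / n.factorial) := by
  have hrad := ordinaryHypergeometricSeries_radius_eq_one (𝔸 := ℝ) a b c fun k =>
    have hk : (0 : ℝ) ≤ k := k.cast_nonneg
    ⟨by linarith, by linarith, by linarith⟩
  have h := (ordinaryHypergeometricSeries ℝ a b c).summable_norm_apply (x := z)
    (by simpa [hrad, enorm_eq_nnnorm, ← NNReal.coe_lt_coe] using hz)
  refine h.of_norm.congr fun n => ?_
  rw [ordinaryHypergeometricSeries_apply_eq]
  simp only [poch_eq_ascPochhammer_eval, smul_eq_mul]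
  ring

section Beta

variable {p q : ℝ}

lemma ofReal_rpow_mul_one_sub_rpow {x : ℝ} (hx : x ∈ Ioo 0 1) :
    ((x ^ (p - 1) * (1 - x) ^ (q - 1) : ℝ) : ℂ)
      = (x : ℂ) ^ (p - 1 : ℂ) * (1 - x : ℂ) ^ (q - 1 : ℂ) := by
  rw [Complex.ofReal_mul, Complex.ofReal_cpow hx.1.le, Complex.ofReal_cpow (by linarith [hx.2])]
  push_cast
  rfl

lemma integrableOn_rpow_mul_one_sub_rpow (hp : 0 < p) (hq : 0 < q) :
    IntegrableOn (fun x : ℝ => x ^ (p - 1) * (1 - x) ^ (q - 1)) (Ioo 0 1) := by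
  have h := Complex.betaIntegral_convergent (u := p) (v := q) (by simpa) (by simpa)
  rw [intervalIntegrable_iff_integrableOn_Ioo_of_le zero_le_one] at h
  refine IntegrableOn.congr_fun h.re (fun x hx => ?_) measurableSet_Ioo
  rw [← ofReal_rpow_mul_one_sub_rpow hx, RCLike.re_to_complex, Complex.ofReal_re]

lemma integral_rpow_mul_one_sub_rpow (hp : 0 < p) (hq : 0 < q) :
    ∫ x in Ioo 0 1, x ^ (p - 1) * (1 - x) ^ (q - 1) = Gamma p * Gamma q / Gamma (p + q) := by
  have h := Complex.betaIntegral_eq_Gamma_mul_div p q (by simpa) (by simpa)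
  rw [Complex.betaIntegral, intervalIntegral.integral_of_le zero_le_one,
    integral_Ioc_eq_integral_Ioo, ← setIntegral_congr_fun measurableSet_Ioo
      fun x hx => ofReal_rpow_mul_one_sub_rpow hx, integral_complex_ofReal] at h
  rw [← Complex.ofReal_add, Complex.Gamma_ofReal, Complex.Gamma_ofReal,
    Complex.Gamma_ofReal] at h
  exact_mod_cast h

end Beta

section Euler

variable {a b c : ℝ}

lemma integral_rpow_add_nat_mul_one_sub_rpow (hb : 0 < b) (hbc : b < c) (n : ℕ) :
    ∫ s in Ioo 0 1, s ^ (b + n - 1) * (1 - s) ^ (c - b - 1)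
      = Gamma b * Gamma (c - b) / Gamma c * (poch b n / poch c n) := by
  have hc : 0 < c := hb.trans hbc
  rw [integral_rpow_mul_one_sub_rpow (by positivity) (sub_pos.2 hbc),
    show b + n + (c - b) = c + n by ring, Gamma_add_nat_eq_mul_poch hb,
    Gamma_add_nat_eq_mul_poch hc]
  have : poch c n ≠ 0 := (poch_pos hc n).ne'
  have : Gamma c ≠ 0 := (Gamma_pos_of_pos hc).ne'
  field_simp

lemma hasSum_euler_integrand (z : ℝ) {s : ℝ} (hz : |z| < 1) (hs : s ∈ Ioo 0 1) :
    HasSum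
      (fun n : ℕ => poch a n / n.factorial * z ^ n * (s ^ (b + n - 1) * (1 - s) ^ (c - b - 1)))
      (s ^ (b - 1) * (1 - s) ^ (c - b - 1) * (1 - z * s) ^ (-a)) := by
  have hzs : |z * s| < 1 := by
    rw [abs_mul, abs_of_pos hs.1]
    nlinarith [abs_nonneg z, hs.2]
  refine ((hasSum_poch_div_factorial_mul_pow a hzs).mul_left
    (s ^ (b - 1) * (1 - s) ^ (c - b - 1))).congr_fun fun n => ?_
  rw [show b + n - 1 = b - 1 + n by ring, rpow_add hs.1, rpow_natCast, mul_pow]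
  ring

theorem integral_euler_hyp2F1 (ha : 0 < a) (hb : 0 < b) (hbc : b < c) {z : ℝ} (hz : |z| < 1) :
    ∫ s in Ioo 0 1, s ^ (b - 1) * (1 - s) ^ (c - b - 1) * (1 - z * s) ^ (-a)
      = Gamma b * Gamma (c - b) / Gamma c * hyp2F1 a b c z := by
  set G : ℝ → ℕ → ℝ → ℝ := fun w n s =>
    poch a n / n.factorial * w ^ n * (s ^ (b + n - 1) * (1 - s) ^ (c - b - 1))
  have hG_integral (w : ℝ) (n : ℕ) : ∫ s in Ioo 0 1, G w n s
      = Gamma b * Gamma (c - b) / Gamma c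
        * (poch a n * poch b n / poch c n * w ^ n / n.factorial) := by
    rw [integral_const_mul, integral_rpow_add_nat_mul_one_sub_rpow hb hbc]
    ring
  have hG_norm (n : ℕ) : ∀ s ∈ Ioo (0 : ℝ) 1, ‖G z n s‖ = G |z| n s := fun s hs => by
    have hs1 : 0 ≤ 1 - s := by linarith [hs.2]
    simp only [G, norm_mul, norm_div, norm_pow, Real.norm_eq_abs, abs_of_pos (poch_pos ha n),
      Nat.abs_cast, abs_of_nonneg (rpow_nonneg hs.1.le _), abs_of_nonneg (rpow_nonneg hs1 _)]
  have hG_summable : Summable fun n => ∫ s in Ioo 0 1, ‖G z n s‖ := by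
    simp_rw [setIntegral_congr_fun measurableSet_Ioo (hG_norm _), hG_integral]
    exact (summable_hyp2F1_terms ha hb (hb.trans hbc) (by rwa [abs_abs])).mul_left _
  have hG_integrable (n : ℕ) : IntegrableOn (G z n) (Ioo 0 1) :=
    (integrableOn_rpow_mul_one_sub_rpow (by positivity) (sub_pos.2 hbc)).const_mul _
  rw [← setIntegral_congr_fun measurableSet_Ioo
      fun s hs => (hasSum_euler_integrand z hz hs).tsum_eq,
    ← integral_tsum_of_summable_integral_norm hG_integrable hG_summable]
  simp_rw [hG_integral, tsum_mul_left, hyp2F1]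

end Euler

lemma integral_comp_cos_mul_sin {α β : ℝ} (hα : 0 ≤ α) (hαβ : α ≤ β) (hβ : β ≤ π)
    (g : ℝ → ℝ) :
    ∫ θ in α..β, g (cos θ) * sin θ = ∫ u in cos β..cos α, g u := by
  have h := integral_Icc_deriv_smul_of_deriv_nonpos (f' := fun θ => -sin θ) (g := g)
    continuousOn_cos (fun θ _ => hasDerivAt_cos θ)
    (fun θ hθ => neg_nonpos.2 (sin_nonneg_of_nonneg_of_le_pi (by linarith [hθ.1])
      (by linarith [hθ.2]))) hαβ
  simp only [smul_eq_mul, neg_mul, integral_neg, neg_inj] at h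
  rw [intervalIntegral.integral_of_le hαβ,
    intervalIntegral.integral_of_le (cos_le_cos_of_nonneg_of_le_pi hα hβ hαβ),
    ← integral_Icc_eq_integral_Ioc, ← integral_Icc_eq_integral_Ioc, ← h]
  simp_rw [mul_comm]

lemma integral_abel_eq_integral_euler (a b : ℝ) {z : ℝ} (hz0 : 0 < z) (hz1 : z < 1) :
    ∫ u in -1..2 * z - 1, (1 - u) ^ (-a) * (1 + u) ^ (b - 1) / √(2 * z - 1 - u)
      = 2 ^ (-a) * (2 * z) ^ (b - 1 / 2)
        * ∫ s in Ioo 0 1, s ^ (b - 1) * (1 - s) ^ (-(1 / 2 : ℝ)) * (1 - z * s) ^ (-a) := by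
  have h2z : 0 < 2 * z := by positivity
  have hpow : (2 * z) ^ (b - 1 / 2) = (2 * z) ^ (b - 1) * √(2 * z) := by
    rw [sqrt_eq_rpow, ← rpow_add h2z]
    ring_nf
  have hpt : ∀ s ∈ Ioo (0 : ℝ) 1,
      2 * z * ((1 - (2 * z * s - 1)) ^ (-a) * (1 + (2 * z * s - 1)) ^ (b - 1)
        / √(2 * z - 1 - (2 * z * s - 1)))
      = 2 ^ (-a) * (2 * z) ^ (b - 1 / 2)
        * (s ^ (b - 1) * (1 - s) ^ (-(1 / 2 : ℝ)) * (1 - z * s) ^ (-a)) := by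
    rintro s ⟨hs0, hs1⟩
    have hzs : 0 < 1 - z * s := by nlinarith
    rw [show 1 - (2 * z * s - 1) = 2 * (1 - z * s) by ring,
      show 1 + (2 * z * s - 1) = 2 * z * s by ring,
      show 2 * z - 1 - (2 * z * s - 1) = 2 * z * (1 - s) by ring,
      mul_rpow zero_le_two hzs.le, mul_rpow h2z.le hs0.le, sqrt_mul h2z.le, hpow,
      rpow_neg (sub_pos.2 hs1).le, ← sqrt_eq_rpow]
    have : 0 < √(1 - s) := sqrt_pos.2 (sub_pos.2 hs1)
    have : 0 < √(2 * z) := sqrt_pos.2 h2z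
    field_simp
    rw [sq_sqrt h2z.le]
  have hsub := intervalIntegral.mul_integral_comp_mul_sub (a := 0) (b := 1) (c := 2 * z) (d := 1)
    (f := fun u => (1 - u) ^ (-a) * (1 + u) ^ (b - 1) / √(2 * z - 1 - u))
  rw [mul_zero, zero_sub, mul_one] at hsub
  rw [← hsub, intervalIntegral.integral_of_le zero_le_one,
    integral_Ioc_eq_integral_Ioo, ← integral_const_mul, ← integral_const_mul,
    setIntegral_congr_fun measurableSet_Ioo hpt]

theorem integral_abel_eq_hyp2F1 {a b ζ : ℝ} (ha : 0 < a) (hb : 0 < b) (h0 : 0 < ζ)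
    (h1 : ζ < π) :
    ∫ θ in ζ..π, (1 - cos θ) ^ (-a) * (1 + cos θ) ^ (b - 1) * sin θ / √(cos ζ - cos θ)
      = 2 ^ (-a) * (2 * cos (ζ / 2) ^ 2) ^ (b - 1 / 2) * (Gamma b * √π / Gamma (b + 1 / 2))
        * hyp2F1 a b (b + 1 / 2) (cos (ζ / 2) ^ 2) := by
  set z : ℝ := cos (ζ / 2) ^ 2 with hz
  have hz0 : 0 < z := pow_pos (cos_pos_of_mem_Ioo ⟨by linarith, by linarith⟩) 2
  have hz1 : z < 1 := by
    rw [hz, cos_sq', sub_lt_self_iff]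
    exact pow_pos (sin_pos_of_pos_of_lt_pi (by linarith) (by linarith)) 2
  have hcos : cos ζ = 2 * z - 1 := by rw [hz, cos_sq, show 2 * (ζ / 2) = ζ by ring]; ring
  have heuler := integral_euler_hyp2F1 ha hb (lt_add_of_pos_right b one_half_pos)
    (by rwa [abs_of_pos hz0])
  rw [show b + 1 / 2 - b - 1 = -(1 / 2) by ring, add_sub_cancel_left, Gamma_one_half_eq]
    at heuler
  set g : ℝ → ℝ := fun u => (1 - u) ^ (-a) * (1 + u) ^ (b - 1) / √(2 * z - 1 - u) with hg
  calc (∫ θ in ζ..π, (1 - cos θ) ^ (-a) * (1 + cos θ) ^ (b - 1) * sin θ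
          / √(cos ζ - cos θ))
      = ∫ θ in ζ..π, g (cos θ) * sin θ := by
        refine intervalIntegral.integral_congr fun θ _ => ?_
        rw [hg, hcos]
        ring
    _ = ∫ u in -1..2 * z - 1, g u := by
        rw [integral_comp_cos_mul_sin h0.le h1.le le_rfl, cos_pi, hcos]
    _ = _ := by
        rw [integral_abel_eq_integral_euler a b hz0 hz1, heuler]
        ring

/-- For an integer `d ≥ 3` and `ζ ∈ (0, π)`,
`∫_ζ^π (1−cos θ)^{−(d−2)/2} (1+cos θ)^{(d−3)/2} sin θ / √(cos ζ − cos θ) dθ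
  = (√π Γ((d−1)/2)/Γ(d/2)) cos^{d−2}(ζ/2) ₂F₁((d−2)/2,(d−1)/2;d/2;cos²(ζ/2))`. -/
theorem abel_integral_south (d : ℕ) (hd : 3 ≤ d) (ζ : ℝ) (h0 : 0 < ζ) (h1 : ζ < π) :
    (∫ θ in ζ..π,
        (1 - Real.cos θ) ^ (-(((d:ℝ) - 2)/2)) * (1 + Real.cos θ) ^ (((d:ℝ) - 3)/2)
        * Real.sin θ / Real.sqrt (Real.cos ζ - Real.cos θ))
      = Real.sqrt π * Real.Gamma (((d:ℝ) - 1)/2) / Real.Gamma ((d:ℝ)/2)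
        * Real.cos (ζ/2) ^ ((d:ℝ) - 2)
        * hyp2F1 (((d:ℝ) - 2)/2) (((d:ℝ) - 1)/2) ((d:ℝ)/2) (Real.cos (ζ/2) ^ 2) := by
  have hd' : (3 : ℝ) ≤ d := by exact_mod_cast hd
  have hcos_half : 0 ≤ cos (ζ / 2) := (cos_pos_of_mem_Ioo ⟨by linarith, by linarith⟩).le
  rw [show ((d : ℝ) - 3) / 2 = ((d : ℝ) - 1) / 2 - 1 by ring,
    integral_abel_eq_hyp2F1 (by linarith) (by linarith) h0 h1,
    show ((d : ℝ) - 1) / 2 + 1 / 2 = (d : ℝ) / 2 by ring,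
    show ((d : ℝ) - 1) / 2 - 1 / 2 = ((d : ℝ) - 2) / 2 by ring,
    mul_rpow zero_le_two (sq_nonneg _), ← rpow_natCast, ← rpow_mul hcos_half,
    rpow_neg zero_le_two]
  have : (2 : ℝ) ^ (((d : ℝ) - 2) / 2) ≠ 0 := (rpow_pos_of_pos two_pos _).ne'
  field_simp
  ring_nf
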